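/- Assume infinitely many orthonormal polynomials p_n^μ exist (i.e. rank M̃_k(μ) → ∞ as k → ∞). If z_1, ..., z_ℓ ∈ 𝒮(μ) are distinct, then there exists N such that for all n ≥ N the ℓ×ℓ matrix K_n^μ(z_1,...,z_ℓ; z_1,...,z_ℓ) = (K_n^μ(z_j, z_k))_{j,k=1}^{ℓ} is invertible. -/

import Mathlib

open MeasureTheory Matrix Finset

namespace CD

variable {d : ℕ}

/-- The `L²(μ)` inner product of two polynomial functions. -/
noncomputable def inner2 (μ : Measure (Fin d → ℂ)) (f g : MvPolynomial (Fin d) ℂ) : ℂ :=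
  ∫ z, MvPolynomial.eval z f * (starRingEnd ℂ) (MvPolynomial.eval z g) ∂μ

/-- The moment matrix `M̃_k(μ)` for an enumeration `α` of multi-indices. -/
noncomputable def momentMatrix (μ : Measure (Fin d → ℂ)) (α : ℕ → (Fin d →₀ ℕ)) (k : ℕ) :
    Matrix (Fin (k + 1)) (Fin (k + 1)) ℂ :=
  Matrix.of fun j ℓ =>
    inner2 μ (MvPolynomial.monomial (α (ℓ : ℕ)) 1) (MvPolynomial.monomial (α (j : ℕ)) 1)

/-- `k_n^μ = min {k : rank M̃_k(μ) = n+1}`. -/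
noncomputable def kdeg (μ : Measure (Fin d → ℂ)) (α : ℕ → (Fin d →₀ ℕ)) (n : ℕ) : ℕ :=
  sInf {k | (momentMatrix μ α k).rank = n + 1}

/-- `deg p ≤ k` with respect to the enumeration `α`. -/
def DegLE (α : ℕ → (Fin d →₀ ℕ)) (p : MvPolynomial (Fin d) ℂ) (k : ℕ) : Prop :=
  ∀ m : ℕ, MvPolynomial.coeff (α m) p ≠ 0 → m ≤ k

/-- `deg p = k` with respect to the enumeration `α`. -/
def DegEq (α : ℕ → (Fin d →₀ ℕ)) (p : MvPolynomial (Fin d) ℂ) (k : ℕ) : Prop :=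
  DegLE α p k ∧ MvPolynomial.coeff (α k) p ≠ 0

/-- An admissible enumeration of all multi-indices: a bijection starting at `0` such that
multiplication by any variable increases the index. -/
def AdmissibleEnum (α : ℕ → (Fin d →₀ ℕ)) : Prop :=
  Function.Bijective α ∧ α 0 = 0 ∧
    ∀ (j : Fin d) (n : ℕ), ∃ k : ℕ, n < k ∧ α k = α n + Finsupp.single j 1

/-- The Christoffel–Darboux kernel `K_n(z,w) = ∑_{j≤n} p_j(z) conj (p_j(w))`. -/
noncomputable def CDkernel (p : ℕ → MvPolynomial (Fin d) ℂ) (n : ℕ) (z w : Fin d → ℂ) : ℂ :=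
  ∑ j ∈ Finset.range (n + 1),
    MvPolynomial.eval z (p j) * (starRingEnd ℂ) (MvPolynomial.eval w (p j))

/-- `p_0, …, p_n` is the Gram–Schmidt orthonormal family in `L²(μ)`:
orthonormal, with `p_m` a linear combination of the monomials `z^{α(k_0)},…,z^{α(k_m)}`
with positive (real) leading coefficient. -/
def IsONBasisUpTo (μ : Measure (Fin d → ℂ)) (α : ℕ → (Fin d →₀ ℕ))
    (p : ℕ → MvPolynomial (Fin d) ℂ) (n : ℕ) : Prop :=
  (∀ i ≤ n, ∀ j ≤ n, inner2 μ (p i) (p j) = if i = j then 1 else 0) ∧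
  (∀ m ≤ n, ∃ c : Fin (m + 1) → ℂ, 0 < (c (Fin.last m)).re ∧ (c (Fin.last m)).im = 0 ∧
      p m = ∑ i : Fin (m + 1), MvPolynomial.monomial (α (kdeg μ α (i : ℕ))) (c i))

/-- The full Gram–Schmidt orthonormal sequence of `μ`. -/
def IsONBasis (μ : Measure (Fin d → ℂ)) (α : ℕ → (Fin d →₀ ℕ))
    (p : ℕ → MvPolynomial (Fin d) ℂ) : Prop :=
  ∀ n, IsONBasisUpTo μ α p n

/-- The (closed) support of a measure. -/
def msupport {X : Type*} [TopologicalSpace X] [MeasurableSpace X] (μ : Measure X) : Set X :=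
  {x | ∀ U : Set X, x ∈ U → IsOpen U → μ U ≠ 0}

/-- `𝒩(μ)`: the ideal of polynomials vanishing on `supp(μ)`. -/
def Nideal (μ : Measure (Fin d → ℂ)) : Set (MvPolynomial (Fin d) ℂ) :=
  {q | ∀ z ∈ msupport μ, MvPolynomial.eval z q = 0}

/-- `𝒩_n(μ) = {p ∈ 𝒩(μ) : deg p ≤ k_n^μ}`. -/
def NidealLE (μ : Measure (Fin d → ℂ)) (α : ℕ → (Fin d →₀ ℕ)) (n : ℕ) :
    Set (MvPolynomial (Fin d) ℂ) :=
  {q | q ∈ Nideal μ ∧ DegLE α q (kdeg μ α n)}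

/-- `𝒮_n(μ)`: the common zero set of `𝒩_n(μ)`. -/
def Svariety (μ : Measure (Fin d → ℂ)) (α : ℕ → (Fin d →₀ ℕ)) (n : ℕ) : Set (Fin d → ℂ) :=
  {z | ∀ q ∈ NidealLE μ α n, MvPolynomial.eval z q = 0}

/-- `𝒮(μ)`: the Zariski closure of `supp(μ)`, i.e. the common zero set of `𝒩(μ)`. -/
def Szar (μ : Measure (Fin d → ℂ)) : Set (Fin d → ℂ) :=
  {z | ∀ q ∈ Nideal μ, MvPolynomial.eval z q = 0}

/-- `ℒ_n(μ)`: the span of `p_0,…,p_n`. -/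
def Lspan (p : ℕ → MvPolynomial (Fin d) ℂ) (n : ℕ) : Set (MvPolynomial (Fin d) ℂ) :=
  {q | ∃ c : Fin (n + 1) → ℂ, q = ∑ j : Fin (n + 1), c j • p (j : ℕ)}

/-- The `L²(μ)` norm of a polynomial. -/
noncomputable def norm2 (μ : Measure (Fin d → ℂ)) (f : MvPolynomial (Fin d) ℂ) : ℝ :=
  Real.sqrt ((inner2 μ f f).re)

/-- Multivariate cosine function `C_n(z,w)`. -/
noncomputable def coskM (p : ℕ → MvPolynomial (Fin d) ℂ) (n : ℕ) (z w : Fin d → ℂ) : ℂ :=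
  CDkernel p n z w /
    ((Real.sqrt ((CDkernel p n z z).re) * Real.sqrt ((CDkernel p n w w).re) : ℝ) : ℂ)

/-! The moment matrix `M̃_k(μ)` is the Gram matrix in `L²(μ)` of the first `k + 1` monomials, so
its rank is the dimension of their span in `L²(μ)`, and this rank grows by at most one at each
step. Consequently `p_0, …, p_{r-1}`, where `r = rank M̃_t(μ)`, are `r` orthonormal vectors of that
span and exhaust it: modulo polynomials vanishing `μ`-a.e., which vanish on `𝒮(μ)`, every
polynomial is a combination of the `p_j`. Since evaluation at distinct points is onto `ℂ^ℓ`
(interpolation), the vectors `(p_m(z_j))_j` span `ℂ^ℓ`; by noetherianity those with `m ≤ n` already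
do for `n` large, and then `K_n = A Aᴴ` with `A = (p_m(z_j))_{j,m}` has full rank. -/

section Support

variable {X : Type*} [TopologicalSpace X] [MeasurableSpace X]

lemma msupport_eq_support (μ : Measure X) : msupport μ = μ.support := by
  simp [Measure.support_eq_forall_isOpen, msupport, pos_iff_ne_zero]

lemma eq_zero_of_mem_msupport {E : Type*} [TopologicalSpace E] [T1Space E] [Zero E]
    {μ : Measure X} {f : X → E} (hf : Continuous f) (h : f =ᵐ[μ] 0) {x : X}
    (hx : x ∈ msupport μ) : f x = 0 :=
  Measure.support_subset_of_isClosed (isClosed_singleton.preimage hf) h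
    (msupport_eq_support μ ▸ hx)

lemma memLp_of_isCompact_msupport [SecondCountableTopology X] [OpensMeasurableSpace X]
    {E : Type*} [NormedAddCommGroup E] {μ : Measure X} [IsFiniteMeasure μ]
    (hμc : IsCompact (msupport μ)) {f : X → E} (hf : Continuous f) (p : ENNReal) :
    MemLp f p μ := by
  obtain ⟨C, hC⟩ := hμc.exists_bound_of_continuousOn hf.continuousOn
  refine MemLp.of_bound hf.aestronglyMeasurable C ?_
  filter_upwards [msupport_eq_support μ ▸ Measure.support_mem_ae (μ := μ)] with x hx
  exact hC x hx

end Support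

section L2

open MvPolynomial

variable {μ : Measure (Fin d → ℂ)} [IsFiniteMeasure μ]

noncomputable def polyToL2 (hμc : IsCompact (msupport μ)) :
    MvPolynomial (Fin d) ℂ →ₗ[ℂ] Lp ℂ 2 μ where
  toFun q := (memLp_of_isCompact_msupport hμc (continuous_eval q) 2).toLp _
  map_add' f g := by
    simp_rw [map_add]
    exact MemLp.toLp_add _ _
  map_smul' c f := by
    simp_rw [smul_eval]
    exact MemLp.toLp_const_smul c _

variable (hμc : IsCompact (msupport μ))

lemma coeFn_polyToL2 (q : MvPolynomial (Fin d) ℂ) :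
    polyToL2 hμc q =ᵐ[μ] fun z => eval z q :=
  MemLp.coeFn_toLp (memLp_of_isCompact_msupport hμc (continuous_eval q) 2)

lemma inner2_eq_inner (f g : MvPolynomial (Fin d) ℂ) :
    inner2 μ f g = inner ℂ (polyToL2 hμc g) (polyToL2 hμc f) := by
  rw [L2.inner_def, inner2]
  refine integral_congr_ae ?_
  filter_upwards [coeFn_polyToL2 hμc f, coeFn_polyToL2 hμc g] with z hf hg
  rw [hf, hg, RCLike.inner_apply, mul_comm]

lemma mem_Nideal_of_polyToL2_eq_zero {q : MvPolynomial (Fin d) ℂ} (hq : polyToL2 hμc q = 0) :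
    q ∈ Nideal μ := fun _ hz =>
  eq_zero_of_mem_msupport (f := fun z => eval z q) (continuous_eval q)
    ((coeFn_polyToL2 hμc q).symm.trans (Lp.eq_zero_iff_ae_eq_zero.mp hq)) hz

end L2

open Module Submodule in
theorem _root_.Matrix.rank_gram {𝕜 E n : Type*} [RCLike 𝕜] [NormedAddCommGroup E]
    [InnerProductSpace 𝕜 E] [Fintype n] (v : n → E) :
    (gram 𝕜 v).rank = finrank 𝕜 (span 𝕜 (Set.range v)) := by
  have hker : LinearMap.ker (gram 𝕜 v).mulVecLin =
      LinearMap.ker (Fintype.linearCombination 𝕜 v) := by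
    ext x
    simp only [LinearMap.mem_ker, mulVecLin_apply, Fintype.linearCombination_apply]
    constructor
    · intro h
      have hx := star_dotProduct_gram_mulVec v x x
      rw [h, dotProduct_zero] at hx
      exact inner_self_eq_zero.mp hx.symm
    · intro h
      ext i
      simpa [mulVec, dotProduct, inner_sum, inner_smul_right, mul_comm] using
        congrArg (inner 𝕜 (v i)) h
  have h₁ := LinearMap.finrank_range_add_finrank_ker (gram 𝕜 v).mulVecLin
  have h₂ := LinearMap.finrank_range_add_finrank_ker (Fintype.linearCombination 𝕜 v)
  rw [hker] at h₁
  rw [Fintype.range_linearCombination] at h₂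
  rw [Matrix.rank]
  omega

open Module Submodule in
theorem _root_.Submodule.finrank_span_range_fin_succ_le {K V : Type*} [DivisionRing K]
    [AddCommGroup V] [Module K V] (f : ℕ → V) (k : ℕ) :
    finrank K (span K (Set.range fun j : Fin (k + 1) => f j)) ≤
      finrank K (span K (Set.range fun j : Fin k => f j)) + 1 := by
  have : FiniteDimensional K (span K (Set.range fun j : Fin k => f j)) :=
    FiniteDimensional.span_of_finite K (Set.finite_range _)
  have hle : span K (Set.range fun j : Fin (k + 1) => f j) ≤
      span K (Set.range fun j : Fin k => f j) ⊔ K ∙ f k := by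
    refine span_le.2 ?_
    rintro _ ⟨j, rfl⟩
    induction j using Fin.lastCases with
    | last => exact mem_sup_right (mem_span_singleton_self _)
    | cast j => exact mem_sup_left (subset_span ⟨j, rfl⟩)
  calc _ ≤ finrank K ↥(span K (Set.range fun j : Fin k => f j) ⊔ K ∙ f k) :=
        finrank_mono hle
    _ ≤ finrank K (span K (Set.range fun j : Fin k => f j)) + finrank K (K ∙ f k) :=
        finrank_add_le_finrank_add_finrank _ _
    _ ≤ _ := by
        gcongr
        simpa using finrank_span_le_card ({f k} : Set V)

section MomentMatrix

open MvPolynomial Module Submodule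

variable {μ : Measure (Fin d → ℂ)} [IsFiniteMeasure μ] {α : ℕ → (Fin d →₀ ℕ)}

lemma rank_momentMatrix (hμc : IsCompact (msupport μ)) (k : ℕ) :
    (momentMatrix μ α k).rank =
      finrank ℂ (span ℂ (Set.range fun j : Fin (k + 1) => polyToL2 hμc (monomial (α j) 1))) := by
  have : momentMatrix μ α k = gram ℂ fun j : Fin (k + 1) => polyToL2 hμc (monomial (α j) 1) := by
    ext j l
    rw [momentMatrix, of_apply, gram_apply, inner2_eq_inner]
  rw [this, Matrix.rank_gram]

lemma rank_momentMatrix_succ_le (hμc : IsCompact (msupport μ)) (k : ℕ) :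
    (momentMatrix μ α (k + 1)).rank ≤ (momentMatrix μ α k).rank + 1 := by
  simpa only [rank_momentMatrix hμc] using
    Submodule.finrank_span_range_fin_succ_le (fun j => polyToL2 hμc (monomial (α j) 1)) (k + 1)

end MomentMatrix

theorem _root_.Nat.exists_le_eq_of_succ_le_add_one {f : ℕ → ℕ} (hf : ∀ k, f (k + 1) ≤ f k + 1)
    {v t : ℕ} (h0 : f 0 ≤ v) (ht : v ≤ f t) : ∃ k ≤ t, f k = v := by
  induction t with
  | zero => exact ⟨0, le_rfl, le_antisymm h0 ht⟩
  | succ t ih =>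
    by_cases h : v ≤ f t
    · obtain ⟨k, hkt, hk⟩ := ih h
      exact ⟨k, hkt.trans t.le_succ, hk⟩
    · exact ⟨t + 1, le_rfl, by have := hf t; omega⟩

section Completeness

open MvPolynomial Module Submodule

variable {μ : Measure (Fin d → ℂ)} [IsFiniteMeasure μ] {α : ℕ → (Fin d →₀ ℕ)}
  {p : ℕ → MvPolynomial (Fin d) ℂ}

lemma kdeg_le_of_lt_rank (hμc : IsCompact (msupport μ)) {j t : ℕ}
    (h : j < (momentMatrix μ α t).rank) : kdeg μ α j ≤ t := by
  obtain ⟨k, hkt, hk⟩ := Nat.exists_le_eq_of_succ_le_add_one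
    (f := fun k => (momentMatrix μ α k).rank) (rank_momentMatrix_succ_le hμc)
    ((momentMatrix μ α 0).rank_le_width.trans (Nat.le_add_left 1 j)) (Nat.succ_le_of_lt h)
  exact (Nat.sInf_le (show k ∈ {k | (momentMatrix μ α k).rank = j + 1} from hk)).trans hkt

lemma orthonormal_polyToL2 (hμc : IsCompact (msupport μ)) (hp : IsONBasis μ α p) :
    Orthonormal ℂ (polyToL2 hμc ∘ p) := by
  classical
  refine orthonormal_iff_ite.2 fun i j => ?_
  rw [Function.comp_apply, Function.comp_apply, ← inner2_eq_inner,
    (hp (max i j)).1 j (le_max_right i j) i (le_max_left i j)]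
  exact if_congr eq_comm rfl rfl

lemma polyToL2_mem_span_monomials (hμc : IsCompact (msupport μ)) (hp : IsONBasis μ α p)
    {j t : ℕ} (h : j < (momentMatrix μ α t).rank) :
    polyToL2 hμc (p j) ∈
      span ℂ (Set.range fun i : Fin (t + 1) => polyToL2 hμc (monomial (α i) 1)) := by
  obtain ⟨c, -, -, hpj⟩ := (hp j).2 j le_rfl
  rw [hpj, map_sum]
  refine sum_mem fun i _ => ?_
  have hi : kdeg μ α i < t + 1 :=
    Nat.lt_succ_of_le (kdeg_le_of_lt_rank hμc (i.is_le.trans_lt h))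
  rw [← mul_one (c i), ← smul_eq_mul, ← smul_monomial, map_smul]
  exact smul_mem _ _ (subset_span ⟨⟨_, hi⟩, rfl⟩)

/-- The first `rank M̃_t(μ)` orthonormal polynomials are independent in `L²(μ)` and lie in the
span of the first `t + 1` monomials, whose dimension there is `rank M̃_t(μ)`. -/
lemma polyToL2_monomial_mem_span (hμc : IsCompact (msupport μ)) (hp : IsONBasis μ α p)
    (t : ℕ) : polyToL2 hμc (monomial (α t) 1) ∈ span ℂ (Set.range (polyToL2 hμc ∘ p)) := by
  set r := (momentMatrix μ α t).rank
  set U := span ℂ (Set.range fun i : Fin (t + 1) => polyToL2 hμc (monomial (α i) 1))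
  have : FiniteDimensional ℂ U := FiniteDimensional.span_of_finite ℂ (Set.finite_range _)
  have hli : LinearIndependent ℂ fun j : Fin r => polyToL2 hμc (p j) :=
    (orthonormal_polyToL2 hμc hp).linearIndependent.comp _ Fin.val_injective
  have hU : span ℂ (Set.range fun j : Fin r => polyToL2 hμc (p j)) = U := by
    refine eq_of_le_of_finrank_eq (span_le.2 ?_) ?_
    · rintro _ ⟨j, rfl⟩
      exact polyToL2_mem_span_monomials hμc hp j.isLt
    · rw [finrank_span_eq_card hli, Fintype.card_fin]
      exact rank_momentMatrix hμc t
  have hmem : polyToL2 hμc (monomial (α t) 1) ∈ U := subset_span ⟨Fin.last t, rfl⟩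
  rw [← hU] at hmem
  exact span_mono (by rintro _ ⟨j, rfl⟩; exact ⟨j, rfl⟩) hmem

lemma exists_mem_span_sub_mem_Nideal (hμc : IsCompact (msupport μ))
    (hα : Function.Surjective α) (hp : IsONBasis μ α p) (q : MvPolynomial (Fin d) ℂ) :
    ∃ w ∈ span ℂ (Set.range p), q - w ∈ Nideal μ := by
  have hq : polyToL2 hμc q ∈ (span ℂ (Set.range p)).map (polyToL2 hμc) := by
    rw [map_span, ← Set.range_comp]
    induction q using MvPolynomial.induction_on' with
    | monomial s c =>
      obtain ⟨t, rfl⟩ := hα s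
      rw [← mul_one c, ← smul_eq_mul, ← smul_monomial, map_smul]
      exact smul_mem _ _ (polyToL2_monomial_mem_span hμc hp t)
    | add f g hf hg =>
      rw [map_add]
      exact add_mem hf hg
  obtain ⟨w, hw, hwq⟩ := mem_map.1 hq
  exact ⟨w, hw, mem_Nideal_of_polyToL2_eq_zero hμc (by rw [map_sub, hwq, sub_self])⟩

end Completeness

open Submodule in
theorem _root_.Submodule.exists_forall_ge_span_range_fin_eq_top {R M : Type*} [Semiring R]
    [AddCommMonoid M] [Module R M] [IsNoetherian R M] {v : ℕ → M}
    (hv : span R (Set.range v) = ⊤) :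
    ∃ N, ∀ n ≥ N, span R (Set.range fun m : Fin (n + 1) => v m) = ⊤ := by
  let S : ℕ →o Submodule R M :=
    ⟨fun n => span R (Set.range fun m : Fin (n + 1) => v m), fun a b hab =>
      span_mono <| by rintro _ ⟨j, rfl⟩; exact ⟨⟨j, by omega⟩, rfl⟩⟩
  obtain ⟨N, hN⟩ := monotone_stabilizes_iff_noetherian.mpr inferInstance S
  have hSN : S N = ⊤ := by
    refine eq_top_iff.2 (hv ▸ span_le.2 ?_)
    rintro _ ⟨m, rfl⟩
    rw [SetLike.mem_coe, hN (max N m) (le_max_left N m)]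
    exact subset_span ⟨⟨m, by omega⟩, rfl⟩
  exact ⟨N, fun n hn => (hN n hn).symm.trans hSN⟩

theorem _root_.Matrix.isUnit_mul_conjTranspose_of_span_col_eq_top {m n R : Type*} [Fintype m]
    [Fintype n] [DecidableEq m] [Field R] [PartialOrder R] [StarRing R] [StarOrderedRing R]
    (A : Matrix m n R) (hA : Submodule.span R (Set.range A.col) = ⊤) : IsUnit (A * Aᴴ) := by
  have hrange : LinearMap.range (A * Aᴴ).mulVecLin = ⊤ := by
    refine Submodule.eq_top_of_finrank_eq ?_
    change (A * Aᴴ).rank = _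
    rw [rank_self_mul_conjTranspose, rank_eq_finrank_span_cols, hA, finrank_top]
  rw [← mulVec_surjective_iff_isUnit, ← coe_mulVecLin]
  exact LinearMap.range_eq_top.1 hrange

section Points

open MvPolynomial

variable {ι : Type*}

noncomputable def evalAt (zs : ι → (Fin d → ℂ)) : MvPolynomial (Fin d) ℂ →ₐ[ℂ] ι → ℂ :=
  AlgHom.pi fun j => aeval (zs j)

@[simp]
lemma evalAt_apply (zs : ι → (Fin d → ℂ)) (q : MvPolynomial (Fin d) ℂ) (j : ι) :
    evalAt zs q j = eval (zs j) q := by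
  simp [evalAt]

lemma exists_evalAt_eq_single [Fintype ι] [DecidableEq ι] {zs : ι → (Fin d → ℂ)}
    (hinj : Function.Injective zs) (k : ι) : ∃ q, evalAt zs q = Pi.single k 1 := by
  have hsep : ∀ i : {i // i ≠ k}, ∃ g, evalAt zs g i = 0 ∧ evalAt zs g k = 1 := by
    rintro ⟨i, hi⟩
    obtain ⟨r, hr⟩ := Function.ne_iff.1 (hinj.ne hi)
    refine ⟨(C (zs k r - zs i r)⁻¹ * (X r - C (zs i r)) : MvPolynomial (Fin d) ℂ), ?_, ?_⟩
    · simp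
    · simp [inv_mul_cancel₀ (sub_ne_zero.2 hr.symm)]
  choose g hg0 hg1 using hsep
  refine ⟨∏ i, g i, funext fun j => ?_⟩
  rw [map_prod, Finset.prod_apply]
  by_cases hj : j = k
  · subst hj
    simp [hg1]
  · rw [Pi.single_eq_of_ne hj]
    exact Finset.prod_eq_zero (i := ⟨j, hj⟩) (Finset.mem_univ _) (hg0 ⟨j, hj⟩)

lemma evalAt_surjective [Finite ι] {zs : ι → (Fin d → ℂ)} (hinj : Function.Injective zs) :
    Function.Surjective (evalAt zs) := by
  classical
  have := Fintype.ofFinite ι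
  choose L hL using exists_evalAt_eq_single hinj
  have hL' : ∀ k j, eval (zs j) (L k) = (Pi.single k 1 : ι → ℂ) j := fun k j => by
    rw [← evalAt_apply, hL]
  intro v
  refine ⟨∑ k, C (v k) * L k, funext fun j => ?_⟩
  simp [hL', Pi.single_apply]

lemma of_CDkernel_eq_mul_conjTranspose (p : ℕ → MvPolynomial (Fin d) ℂ) (zs : ι → (Fin d → ℂ))
    (n : ℕ) :
    (Matrix.of fun j k => CDkernel p n (zs j) (zs k)) =
      Matrix.of (fun j (m : Fin (n + 1)) => evalAt zs (p m) j) *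
        (Matrix.of fun j (m : Fin (n + 1)) => evalAt zs (p m) j)ᴴ := by
  ext j k
  simp only [Matrix.of_apply, Matrix.mul_apply, Matrix.conjTranspose_apply, evalAt_apply,
    CDkernel]
  exact (Fin.sum_univ_eq_sum_range
    (fun m => eval (zs j) (p m) * (starRingEnd ℂ) (eval (zs k) (p m))) _).symm

lemma span_range_evalAt_comp_eq_top {μ : Measure (Fin d → ℂ)} [IsFiniteMeasure μ]
    {α : ℕ → (Fin d →₀ ℕ)} {p : ℕ → MvPolynomial (Fin d) ℂ} [Finite ι]
    {zs : ι → (Fin d → ℂ)} (hμc : IsCompact (msupport μ)) (hα : Function.Surjective α)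
    (hp : IsONBasis μ α p) (hinj : Function.Injective zs) (hzS : ∀ j, zs j ∈ Szar μ) :
    Submodule.span ℂ (Set.range (evalAt zs ∘ p)) = ⊤ := by
  refine eq_top_iff.2 fun v _ => ?_
  obtain ⟨q, rfl⟩ := evalAt_surjective hinj v
  obtain ⟨w, hw, hqw⟩ := exists_mem_span_sub_mem_Nideal hμc hα hp q
  have hq : evalAt zs q = evalAt zs w :=
    sub_eq_zero.1 (funext fun j => by simpa using hzS j _ hqw)
  rw [hq, Set.range_comp]
  exact Submodule.apply_mem_span_image_of_mem_span (evalAt zs).toLinearMap hw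

end Points

theorem statement10_general (μ : Measure (Fin d → ℂ)) [IsFiniteMeasure μ]
    (hμc : IsCompact (msupport μ))
    (α : ℕ → (Fin d →₀ ℕ)) (hα : AdmissibleEnum α)
    (p : ℕ → MvPolynomial (Fin d) ℂ) (hp : IsONBasis μ α p)
    (ℓ : ℕ) (zs : Fin ℓ → (Fin d → ℂ)) (hinj : Function.Injective zs)
    (hzS : ∀ j, zs j ∈ Szar μ) :
    ∃ N : ℕ, ∀ n ≥ N,
      IsUnit (Matrix.of fun j k : Fin ℓ => CDkernel p n (zs j) (zs k)) := by
  obtain ⟨N, hN⟩ := Submodule.exists_forall_ge_span_range_fin_eq_top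
    (span_range_evalAt_comp_eq_top hμc hα.1.2 hp hinj hzS)
  refine ⟨N, fun n hn => ?_⟩
  rw [of_CDkernel_eq_mul_conjTranspose]
  open scoped ComplexOrder in
  exact Matrix.isUnit_mul_conjTranspose_of_span_col_eq_top _ (hN n hn)

/-- Invertibility of the multipoint Christoffel–Darboux kernel matrix at distinct
points of the Zariski closure of the support, for all large `n`. -/
theorem statement10 (μ : Measure (Fin d → ℂ)) [IsFiniteMeasure μ]
    (hμ0 : μ ≠ 0) (hμc : IsCompact (msupport μ))
    (α : ℕ → (Fin d →₀ ℕ)) (hα : AdmissibleEnum α)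
    (hrank : ∀ m : ℕ, ∃ k : ℕ, m + 1 ≤ (momentMatrix μ α k).rank)
    (p : ℕ → MvPolynomial (Fin d) ℂ) (hp : IsONBasis μ α p)
    (ℓ : ℕ) (zs : Fin ℓ → (Fin d → ℂ)) (hinj : Function.Injective zs)
    (hzS : ∀ j, zs j ∈ Szar μ) :
    ∃ N : ℕ, ∀ n ≥ N,
      IsUnit (Matrix.of fun j k : Fin ℓ => CDkernel p n (zs j) (zs k)) :=
  statement10_general μ hμc α hα p hp ℓ zs hinj hzS

end CD
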